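/- Let A be a Banach algebra with unit, H : ℝ → A continuous, t ≥ 0, n_1, n_2 ≥ 1, S_1 ⊆ {1,…,n_1−1} and S_2 ⊆ {1,…,n_2−1}. Then H_{D_{S_1}^{(n_1)}}(t) · H_{D_{S_2}^{(n_2)}}(t) = H_{D_{S_1 ∪ \{n_1\} ∪ (S_2+n_1)}^{(n_1+n_2)}}(t), where S_2 + n_1 := {s + n_1 : s ∈ S_2}. -/

import Mathlib

open MeasureTheory

open Classical in
/-- The descent set of a permutation `σ ∈ S_n` (1-based convention):
`Desc(σ) = {i ∈ {1,…,n−1} : σ(i) > σ(i+1)}`. -/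
noncomputable def descSet {n : ℕ} (σ : Equiv.Perm (Fin n)) : Finset ℕ :=
  (Finset.Ioo 0 n).filter
    (fun i => ∃ h : i < n, σ ⟨i, h⟩ < σ ⟨i - 1, lt_of_le_of_lt (Nat.sub_le i 1) h⟩)

/-- The simplex `Δ_t^n = {0 ≤ t₁ ≤ ⋯ ≤ tₙ ≤ t}` inside `Fin n → ℝ`. -/
def simplex (n : ℕ) (t : ℝ) : Set (Fin n → ℝ) :=
  {u | (∀ i, 0 ≤ u i ∧ u i ≤ t) ∧ ∀ i j, i ≤ j → u i ≤ u j}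

variable {A : Type*} [NormedRing A] [NormedAlgebra ℝ A] [CompleteSpace A]

/-- The iterated integral `H_σ(t) = ∫_{Δ_t^n} H(t_{σ(1)})⋯H(t_{σ(n)}) dt₁⋯dtₙ`. -/
noncomputable def Hperm (H : ℝ → A) {n : ℕ} (σ : Equiv.Perm (Fin n)) (t : ℝ) : A :=
  ∫ u in simplex n t, (List.ofFn (fun j => H (u (σ j)))).prod

/-- `H_n(t) = ∫_{Δ_t^n} H(t₁)⋯H(tₙ) dt₁⋯dtₙ`, with `H_0(t) = 1`. -/
noncomputable def Hn (H : ℝ → A) : ℕ → ℝ → A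
  | 0, _ => 1
  | (n + 1), t => Hperm H (1 : Equiv.Perm (Fin (n + 1))) t

/-- The iterated integral evaluated on the Dynkin element:
`H_{𝒟_m}(t) = Σ_{j=0}^{m-1} (-1)^j H_{D_{={1,…,j}}^{(m)}}(t)`. -/
noncomputable def HDyn (H : ℝ → A) (m : ℕ) (t : ℝ) : A :=
  ∑ j ∈ Finset.range m, (-1 : ℝ) ^ j •
    ∑ σ ∈ Finset.univ.filter
        (fun σ : Equiv.Perm (Fin m) => descSet σ = Finset.Icc 1 j),
      Hperm H σ t

/-!
Substituting `v = u ∘ σ` turns `H_σ(t)` into the integral of `H(v₁)⋯H(vₙ)` over the tuples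
in `[0,t]ⁿ` sorted by `σ⁻¹`. Off the null set of tuples with a repeated entry, each tuple has
exactly one sorting permutation, and the descent set of its inverse lies in `S` exactly when
the tuple itself does not descend at any position outside `S`. Hence `Σ_{Desc σ ⊆ S} H_σ(t)`
is the integral of `H(v₁)⋯H(vₙ)` over the block simplex of tuples in `[0,t]ⁿ` that do not
descend outside `S`. For `S = S₁ ∪ {n₁} ∪ (S₂ + n₁)` a tuple lies in this block simplex iff its
first `n₁` and last `n₂` entries lie in those of `S₁` and `S₂` (the step at `n₁` is free), and
Fubini's theorem factors the integral.
-/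

open Function

def MonotoneOff {α : Type*} [Preorder α] {n : ℕ} (S : Finset ℕ) (f : Fin n → α) : Prop :=
  ∀ j i : Fin n, (i : ℕ) = j + 1 → (i : ℕ) ∉ S → f j ≤ f i

theorem descSet_subset_iff {n : ℕ} (σ : Equiv.Perm (Fin n)) (S : Finset ℕ) :
    descSet σ ⊆ S ↔ MonotoneOff S σ := by
  constructor
  · intro h j i hij hiS
    by_contra hlt
    have hj : (⟨i - 1, by omega⟩ : Fin n) = j := Fin.ext (by simp only; omega)
    exact hiS (h (Finset.mem_filter.2
      ⟨Finset.mem_Ioo.2 ⟨by omega, i.isLt⟩, i.isLt, by rw [hj]; exact not_le.1 hlt⟩))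
  · intro h i hi
    simp only [descSet, Finset.mem_filter, Finset.mem_Ioo] at hi
    obtain ⟨⟨hi0, -⟩, hin, hlt⟩ := hi
    by_contra hiS
    exact (h ⟨i - 1, by omega⟩ ⟨i, hin⟩ (by simp only; omega) hiS).not_gt hlt

theorem StrictMono.monotoneOff_comp_iff {α β : Type*} [LinearOrder α] [Preorder β] {n : ℕ}
    {S : Finset ℕ} {g : α → β} (hg : StrictMono g) {f : Fin n → α} :
    MonotoneOff S (g ∘ f) ↔ MonotoneOff S f := by
  simp only [MonotoneOff, comp_apply, hg.le_iff_le]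

theorem monotoneOff_append_iff {α : Type*} [Preorder α] {m n : ℕ} {S₁ S₂ : Finset ℕ}
    (hS₁ : ∀ s ∈ S₁, s < m) (u : Fin m → α) (w : Fin n → α) :
    MonotoneOff (S₁ ∪ {m} ∪ S₂.image (· + m)) (Fin.append u w) ↔
      MonotoneOff S₁ u ∧ MonotoneOff S₂ w := by
  set S := S₁ ∪ {m} ∪ S₂.image (· + m)
  have mem_left (k : ℕ) (hk : k < m) : k ∈ S ↔ k ∈ S₁ := by
    simp only [S, Finset.mem_union, Finset.mem_singleton, Finset.mem_image]
    refine ⟨?_, fun h => Or.inl (Or.inl h)⟩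
    rintro ((h | h) | ⟨s, -, rfl⟩) <;> first | exact h | omega
  have mem_right (k : ℕ) (hk : k ≠ 0) : m + k ∈ S ↔ k ∈ S₂ := by
    simp only [S, Finset.mem_union, Finset.mem_singleton, Finset.mem_image]
    constructor
    · rintro ((h | h) | ⟨s, hs, hsk⟩)
      · exact absurd (hS₁ _ h) (by omega)
      · omega
      · rwa [show k = s by omega]
    · exact fun h => Or.inr ⟨k, h, by omega⟩
  have mem_mid : m + 0 ∈ S := by simp [S]
  constructor
  · intro h
    refine ⟨fun j i hij hiS => ?_, fun j i hij hiS => ?_⟩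
    · simpa using h (Fin.castAdd n j) (Fin.castAdd n i) (by simpa using hij)
        (by rwa [Fin.val_castAdd, mem_left i i.isLt])
    · simpa using h (Fin.natAdd m j) (Fin.natAdd m i) (by simp only [Fin.val_natAdd]; omega)
        (by rwa [Fin.val_natAdd, mem_right i (by omega)])
  · rintro ⟨hu, hw⟩ j i hij hiS
    induction i using Fin.addCases with
    | left i =>
      obtain ⟨j, rfl⟩ : ∃ j' : Fin m, j = Fin.castAdd n j' :=
        ⟨⟨j, by simp only [Fin.val_castAdd] at hij; omega⟩, rfl⟩
      simpa using hu j i (by simpa using hij) (by rwa [Fin.val_castAdd, mem_left i i.isLt] at hiS)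
    | right i =>
      rw [Fin.val_natAdd] at hij hiS
      have hi0 : (i : ℕ) ≠ 0 := fun h0 => hiS (h0 ▸ mem_mid)
      obtain ⟨j, rfl⟩ : ∃ j' : Fin n, j = Fin.natAdd m j' :=
        ⟨⟨j - m, by omega⟩, Fin.ext (by simp only [Fin.val_natAdd]; omega)⟩
      simpa using hw j i (by simp only [Fin.val_natAdd] at hij; omega)
        (by rwa [mem_right i hi0] at hiS)

theorem setOf_not_injective_eq_iUnion {ι α : Type*} :
    {v : ι → α | ¬Injective v} = ⋃ (i) (j) (_ : i ≠ j), {v | v i = v j} := by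
  ext v
  simp only [Injective, Set.mem_ofPred_eq, Set.mem_iUnion, exists_prop, not_forall]
  exact ⟨fun ⟨i, j, hij, hne⟩ => ⟨i, j, hne, hij⟩, fun ⟨i, j, hne, hij⟩ => ⟨i, j, hij, hne⟩⟩

section Diagonal

variable {ι : Type*} [Fintype ι]

theorem measurableSet_setOf_injective : MeasurableSet {v : ι → ℝ | Injective v} := by
  have h : MeasurableSet {v : ι → ℝ | ¬Injective v} := by
    rw [setOf_not_injective_eq_iUnion]
    exact .iUnion fun i => .iUnion fun j => .iUnion fun _ =>
      measurableSet_eq_fun (measurable_pi_apply i) (measurable_pi_apply j)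
  simpa only [Set.compl_ofPred, not_not] using h.compl

theorem volume_setOf_not_injective : volume {v : ι → ℝ | ¬Injective v} = 0 := by
  classical
  rw [setOf_not_injective_eq_iUnion]
  refine measure_iUnion_null fun i => measure_iUnion_null fun j => measure_iUnion_null fun hij => ?_
  let φ : (ι → ℝ) →ₗ[ℝ] ℝ := LinearMap.proj (R := ℝ) (φ := fun _ : ι => ℝ) i - LinearMap.proj j
  have hker : {v : ι → ℝ | v i = v j} = (LinearMap.ker φ : Set (ι → ℝ)) := by
    ext v
    simp [φ, sub_eq_zero]
  rw [hker]
  refine Measure.addHaar_submodule _ _ fun htop => ?_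
  have h : φ (Pi.single i 1) = 0 := LinearMap.mem_ker.1 (htop ▸ Submodule.mem_top)
  simp [φ, Pi.single_eq_of_ne (Ne.symm hij)] at h

theorem setIntegral_inter_setOf_injective {E : Type*} [NormedAddCommGroup E] [NormedSpace ℝ E]
    (s : Set (ι → ℝ)) (f : (ι → ℝ) → E) :
    ∫ v in s ∩ {v | Injective v}, f v = ∫ v in s, f v := by
  refine setIntegral_congr_set (inter_ae_eq_left_of_ae_eq_univ (ae_eq_univ.2 ?_))
  rw [Set.compl_ofPred]
  exact volume_setOf_not_injective

end Diagonal

theorem measurePreserving_comp_perm {n : ℕ} (σ : Equiv.Perm (Fin n)) :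
    MeasurePreserving (fun v : Fin n → ℝ => v ∘ σ) :=
  volume_preserving_arrowCongr' σ.symm (MeasurableEquiv.refl ℝ) (.id volume)

theorem measurableEmbedding_comp_perm {n : ℕ} (σ : Equiv.Perm (Fin n)) :
    MeasurableEmbedding (fun v : Fin n → ℝ => v ∘ σ) :=
  (MeasurableEquiv.arrowCongr' σ.symm (MeasurableEquiv.refl ℝ)).measurableEmbedding

noncomputable def orderedProd {M : Type*} [Monoid M] (H : ℝ → M) {n : ℕ} (v : Fin n → ℝ) : M :=
  (List.ofFn fun j => H (v j)).prod

theorem continuous_orderedProd {M : Type*} [Monoid M] [TopologicalSpace M] [ContinuousMul M]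
    {H : ℝ → M} (hH : Continuous H) (n : ℕ) : Continuous (orderedProd H (n := n)) := by
  unfold orderedProd
  simp_rw [List.ofFn_eq_map]
  exact continuous_list_prod _ fun j _ => hH.comp (continuous_apply j)

theorem orderedProd_append {M : Type*} [Monoid M] (H : ℝ → M) {m n : ℕ} (u : Fin m → ℝ)
    (w : Fin n → ℝ) : orderedProd H (Fin.append u w) = orderedProd H u * orderedProd H w := by
  simp [orderedProd, List.ofFn_add, Fin.append_right]

def blockSimplex (S : Finset ℕ) (n : ℕ) (t : ℝ) : Set (Fin n → ℝ) :=
  {v | (∀ i, v i ∈ Set.Icc 0 t) ∧ MonotoneOff S v}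

def sortedSimplex {n : ℕ} (π : Equiv.Perm (Fin n)) (t : ℝ) : Set (Fin n → ℝ) :=
  {v | v ∘ π ∈ simplex n t}

theorem mem_sortedSimplex_iff {n : ℕ} {π : Equiv.Perm (Fin n)} {t : ℝ} {v : Fin n → ℝ} :
    v ∈ sortedSimplex π t ↔ (∀ i, v i ∈ Set.Icc 0 t) ∧ Monotone (v ∘ π) :=
  show ((∀ i, v (π i) ∈ Set.Icc 0 t) ∧ _) ↔ _ from
    and_congr_left' (π.surjective.forall (p := fun i => v i ∈ Set.Icc 0 t)).symm

theorem blockSimplex_subset_Icc (S : Finset ℕ) (n : ℕ) (t : ℝ) :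
    blockSimplex S n t ⊆ Set.Icc 0 fun _ => t :=
  fun _ hv => ⟨fun i => (hv.1 i).1, fun i => (hv.1 i).2⟩

theorem sortedSimplex_subset_Icc {n : ℕ} (π : Equiv.Perm (Fin n)) (t : ℝ) :
    sortedSimplex π t ⊆ Set.Icc 0 fun _ => t :=
  fun _ hv => ⟨fun i => (mem_sortedSimplex_iff.1 hv |>.1 i).1,
    fun i => (mem_sortedSimplex_iff.1 hv |>.1 i).2⟩

theorem isClosed_sortedSimplex {n : ℕ} (π : Equiv.Perm (Fin n)) (t : ℝ) :
    IsClosed (sortedSimplex π t) := by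
  have hsimplex : IsClosed (simplex n t) := by
    simp only [simplex, Set.ofPred_and, Set.ofPred_forall]
    refine .inter (isClosed_iInter fun i => .inter ?_ ?_) (isClosed_iInter fun i =>
      isClosed_iInter fun j => isClosed_iInter fun _ => isClosed_le (by fun_prop) (by fun_prop))
    · exact isClosed_le continuous_const (continuous_apply i)
    · exact isClosed_le (continuous_apply i) continuous_const
  exact hsimplex.preimage (by fun_prop)

theorem Hperm_eq_setIntegral_sortedSimplex {E : Type*} [NormedRing E] [NormedAlgebra ℝ E]
    (H : ℝ → E) {n : ℕ} (σ : Equiv.Perm (Fin n)) (t : ℝ) :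
    Hperm H σ t = ∫ v in sortedSimplex σ⁻¹ t, orderedProd H v := by
  have hpre : (fun u : Fin n → ℝ => u ∘ σ) ⁻¹' sortedSimplex σ⁻¹ t = simplex n t := by
    ext u
    simp [sortedSimplex, comp_def]
  rw [← (measurePreserving_comp_perm σ).setIntegral_preimage_emb (measurableEmbedding_comp_perm σ),
    hpre]
  rfl

theorem monotoneOff_iff_descSet_subset {α : Type*} [LinearOrder α] {n : ℕ} {S : Finset ℕ}
    {v : Fin n → α} (hv : Injective v) {σ : Equiv.Perm (Fin n)} (hσ : Monotone (v ∘ ⇑σ⁻¹)) :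
    MonotoneOff S v ↔ descSet σ ⊆ S := by
  have hsorted : StrictMono (v ∘ ⇑σ⁻¹) := hσ.strictMono_of_injective (hv.comp σ⁻¹.injective)
  have hv' : (v ∘ ⇑σ⁻¹) ∘ σ = v := by ext; simp
  rw [descSet_subset_iff, ← hsorted.monotoneOff_comp_iff, hv']

theorem inv_eq_sort_of_monotone {α : Type*} [LinearOrder α] {n : ℕ} {v : Fin n → α}
    (hv : Injective v) {σ : Equiv.Perm (Fin n)} (hσ : Monotone (v ∘ ⇑σ⁻¹)) :
    σ⁻¹ = Tuple.sort v :=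
  Tuple.eq_sort_iff.2 ⟨hσ, fun _ _ hij he => absurd (σ⁻¹.injective (hv he)) hij.ne⟩

theorem blockSimplex_inter_setOf_injective (S : Finset ℕ) (n : ℕ) (t : ℝ) :
    blockSimplex S n t ∩ {v | Injective v} =
      ⋃ σ ∈ Finset.univ.filter (fun σ : Equiv.Perm (Fin n) => descSet σ ⊆ S),
        sortedSimplex σ⁻¹ t ∩ {v | Injective v} := by
  ext v
  simp only [Set.mem_inter_iff, Set.mem_iUnion, Finset.mem_filter, Finset.mem_univ, true_and,
    exists_prop, mem_sortedSimplex_iff, blockSimplex, Set.mem_ofPred_eq]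
  constructor
  · rintro ⟨⟨hbox, hmono⟩, hv⟩
    have hsort : Monotone (v ∘ ⇑(Tuple.sort v)⁻¹⁻¹) := by
      simpa using Tuple.monotone_sort v
    exact ⟨(Tuple.sort v)⁻¹, (monotoneOff_iff_descSet_subset hv hsort).1 hmono,
      ⟨hbox, hsort⟩, hv⟩
  · rintro ⟨σ, hσS, ⟨hbox, hσ⟩, hv⟩
    exact ⟨⟨hbox, (monotoneOff_iff_descSet_subset hv hσ).2 hσS⟩, hv⟩

theorem pairwise_disjoint_sortedSimplex_inter_setOf_injective {n : ℕ} (t : ℝ) :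
    Pairwise fun σ τ : Equiv.Perm (Fin n) =>
      Disjoint (sortedSimplex σ⁻¹ t ∩ {v | Injective v})
        (sortedSimplex τ⁻¹ t ∩ {v | Injective v}) := by
  intro σ τ hστ
  refine Set.disjoint_left.2 fun v ⟨hvσ, hv⟩ ⟨hvτ, _⟩ => hστ (inv_injective ?_)
  rw [inv_eq_sort_of_monotone hv (mem_sortedSimplex_iff.1 hvσ).2,
    inv_eq_sort_of_monotone hv (mem_sortedSimplex_iff.1 hvτ).2]

theorem integrableOn_orderedProd {E : Type*} [NormedRing E] {H : ℝ → E} (hH : Continuous H)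
    {n : ℕ} {s : Set (Fin n → ℝ)} {a b : Fin n → ℝ} (hs : s ⊆ Set.Icc a b) :
    IntegrableOn (orderedProd H) s :=
  ((continuous_orderedProd hH n).continuousOn.integrableOn_compact isCompact_Icc).mono_set hs

theorem sum_Hperm_eq_setIntegral_blockSimplex {E : Type*} [NormedRing E] [NormedAlgebra ℝ E]
    {H : ℝ → E} (hH : Continuous H) (S : Finset ℕ) (n : ℕ) (t : ℝ) :
    ∑ σ ∈ Finset.univ.filter (fun σ : Equiv.Perm (Fin n) => descSet σ ⊆ S), Hperm H σ t =
      ∫ v in blockSimplex S n t, orderedProd H v := by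
  rw [← setIntegral_inter_setOf_injective, blockSimplex_inter_setOf_injective,
    integral_biUnion_finset _
      (fun σ _ => (isClosed_sortedSimplex _ t).measurableSet.inter measurableSet_setOf_injective)
      (fun σ _ τ _ hστ => pairwise_disjoint_sortedSimplex_inter_setOf_injective t hστ)
      (fun σ _ => integrableOn_orderedProd hH
        (Set.inter_subset_left.trans (sortedSimplex_subset_Icc _ t)))]
  refine Finset.sum_congr rfl fun σ _ => ?_
  rw [Hperm_eq_setIntegral_sortedSimplex, setIntegral_inter_setOf_injective]

def MeasurableEquiv.finAppend (α : Type*) [MeasurableSpace α] (m n : ℕ) :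
    (Fin m → α) × (Fin n → α) ≃ᵐ (Fin (m + n) → α) :=
  (MeasurableEquiv.sumPiEquivProdPi fun _ => α).symm.trans
    (MeasurableEquiv.piCongrLeft (fun _ => α) finSumFinEquiv)

theorem MeasurableEquiv.coe_finAppend (α : Type*) [MeasurableSpace α] (m n : ℕ) :
    ⇑(MeasurableEquiv.finAppend α m n) = fun p => Fin.append p.1 p.2 := by
  ext ⟨u, w⟩ i
  induction i using Fin.addCases with
  | left i =>
    simpa [finAppend, coe_piCongrLeft, coe_sumPiEquivProdPi_symm] using
      Equiv.piCongrLeft_sumInl (fun _ => α) finSumFinEquiv u w i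
  | right i =>
    simpa [finAppend, coe_piCongrLeft, coe_sumPiEquivProdPi_symm] using
      Equiv.piCongrLeft_sumInr (fun _ => α) finSumFinEquiv u w i

theorem measurePreserving_finAppend (α : Type*) [MeasureSpace α]
    [SigmaFinite (volume : Measure α)] (m n : ℕ) :
    MeasurePreserving (fun p : (Fin m → α) × (Fin n → α) => Fin.append p.1 p.2)
      (volume.prod volume) volume :=
  MeasurableEquiv.coe_finAppend α m n ▸ Measure.volume_eq_prod (Fin m → α) (Fin n → α) ▸
    (volume_measurePreserving_piCongrLeft (fun _ => α) finSumFinEquiv).comp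
      (volume_measurePreserving_sumPiEquivProdPi_symm fun _ => α)

theorem measurableEmbedding_finAppend (α : Type*) [MeasurableSpace α] (m n : ℕ) :
    MeasurableEmbedding fun p : (Fin m → α) × (Fin n → α) => Fin.append p.1 p.2 :=
  MeasurableEquiv.coe_finAppend α m n ▸ (MeasurableEquiv.finAppend α m n).measurableEmbedding

theorem preimage_append_blockSimplex {m n : ℕ} {S₁ : Finset ℕ} (hS₁ : ∀ s ∈ S₁, s < m)
    (S₂ : Finset ℕ) (t : ℝ) :
    (fun p : (Fin m → ℝ) × (Fin n → ℝ) => Fin.append p.1 p.2) ⁻¹'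
        blockSimplex (S₁ ∪ {m} ∪ S₂.image (· + m)) (m + n) t =
      blockSimplex S₁ m t ×ˢ blockSimplex S₂ n t := by
  ext ⟨u, w⟩
  simp only [blockSimplex, Set.mem_preimage, Set.mem_prod, Set.mem_ofPred_eq,
    monotoneOff_append_iff hS₁, Fin.forall_fin_add, Fin.append_left, Fin.append_right]
  tauto

theorem setIntegral_prod_mul_of_integrableOn {α β E : Type*} [MeasurableSpace α]
    [MeasurableSpace β] {μ : Measure α} {ν : Measure β} [SFinite μ] [SFinite ν] [NormedRing E]
    [NormedAlgebra ℝ E] [CompleteSpace E] {f : α → E} {g : β → E} {s : Set α} {t : Set β}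
    (hf : IntegrableOn f s μ) (hg : IntegrableOn g t ν) :
    ∫ z in s ×ˢ t, f z.1 * g z.2 ∂μ.prod ν = (∫ x in s, f x ∂μ) * ∫ y in t, g y ∂ν := by
  rw [← Measure.prod_restrict]
  exact integral_prod_bilin (ContinuousLinearMap.mul ℝ E) hf hg

theorem HD_mul_HD_general (H : ℝ → A) (hH : Continuous H) (t : ℝ) (n₁ n₂ : ℕ)
    (S₁ S₂ : Finset ℕ) (hS₁ : S₁ ⊆ Finset.Icc 1 (n₁ - 1)) :
    (∑ σ ∈ Finset.univ.filter
        (fun σ : Equiv.Perm (Fin n₁) => descSet σ ⊆ S₁), Hperm H σ t) *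
      (∑ τ ∈ Finset.univ.filter
        (fun τ : Equiv.Perm (Fin n₂) => descSet τ ⊆ S₂), Hperm H τ t) =
      ∑ ρ ∈ Finset.univ.filter
          (fun ρ : Equiv.Perm (Fin (n₁ + n₂)) =>
            descSet ρ ⊆ S₁ ∪ {n₁} ∪ S₂.image (· + n₁)),
        Hperm H ρ t := by
  have hS₁' : ∀ s ∈ S₁, s < n₁ := fun s hs => by have := Finset.mem_Icc.1 (hS₁ hs); omega
  have hint (S : Finset ℕ) (n : ℕ) : IntegrableOn (orderedProd H) (blockSimplex S n t) :=
    integrableOn_orderedProd hH (blockSimplex_subset_Icc S n t)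
  simp only [sum_Hperm_eq_setIntegral_blockSimplex hH]
  rw [← setIntegral_prod_mul_of_integrableOn (hint _ _) (hint _ _),
    ← preimage_append_blockSimplex hS₁',
    ← (measurePreserving_finAppend ℝ n₁ n₂).setIntegral_preimage_emb
      (measurableEmbedding_finAppend ℝ n₁ n₂)]
  simp only [orderedProd_append]

/-- `H_{D_{S₁}^{(n₁)}}(t) · H_{D_{S₂}^{(n₂)}}(t)
= H_{D_{S₁ ∪ {n₁} ∪ (S₂+n₁)}^{(n₁+n₂)}}(t)`. -/
theorem HD_mul_HD (H : ℝ → A) (hH : Continuous H) (t : ℝ) (ht : 0 ≤ t)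
    (n₁ n₂ : ℕ) (h₁ : 1 ≤ n₁) (h₂ : 1 ≤ n₂)
    (S₁ S₂ : Finset ℕ) (hS₁ : S₁ ⊆ Finset.Icc 1 (n₁ - 1)) (hS₂ : S₂ ⊆ Finset.Icc 1 (n₂ - 1)) :
    (∑ σ ∈ Finset.univ.filter
        (fun σ : Equiv.Perm (Fin n₁) => descSet σ ⊆ S₁), Hperm H σ t) *
      (∑ τ ∈ Finset.univ.filter
        (fun τ : Equiv.Perm (Fin n₂) => descSet τ ⊆ S₂), Hperm H τ t) =
      ∑ ρ ∈ Finset.univ.filter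
          (fun ρ : Equiv.Perm (Fin (n₁ + n₂)) =>
            descSet ρ ⊆ S₁ ∪ {n₁} ∪ S₂.image (· + n₁)),
        Hperm H ρ t :=
  HD_mul_HD_general H hH t n₁ n₂ S₁ S₂ hS₁
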